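/- arXiv:2104.13127 — 2 statements merged into one kernel-verified Lean document; each statement's English description precedes it below -/
import Mathlib

section
/- Let X be a real normed space, C ⊂ X convex, E : ℝ^M → ℝ strictly convex, ν : X → ℝ^M linear, and R : X → ℝ convex. If f₁ and f₂ are both minimizers over C of f ↦ E(ν(f)) + R(f), then ν(f₁) = ν(f₂); if moreover R is strictly convex, then f₁ = f₂. -/
/-!
At the midpoint `m` of two minimizers `f₁, f₂`, convexity bounds both terms of the objective by
the averages of their values at `f₁` and `f₂`, whose sum is the common minimal value. If
`ν f₁ ≠ ν f₂`, strict convexity of `E` makes the first bound strict, so `m` would beat the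
minimum; when `R` is strictly convex the whole objective is strictly convex, so its minimizer
is unique.
-/

section

variable {X Y : Type*} [AddCommGroup X] [Module ℝ X] [AddCommGroup Y] [Module ℝ Y]
  {s : Set X} {t : Set Y} {E : Y → ℝ} {ψ : X → ℝ} {x y : X}

lemma StrictConvexOn.map_eq_of_isMinOn_comp_add (hE : StrictConvexOn ℝ t E) (g : X →ₗ[ℝ] Y)
    (hgst : Set.MapsTo g s t) (hs : Convex ℝ s) (hψ : ConvexOn ℝ s ψ)
    (hx : IsMinOn (fun z ↦ E (g z) + ψ z) s x) (hy : IsMinOn (fun z ↦ E (g z) + ψ z) s y)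
    (hxs : x ∈ s) (hys : y ∈ s) : g x = g y := by
  by_contra hne
  set m := (2 : ℝ)⁻¹ • x + (2 : ℝ)⁻¹ • y
  have hm : m ∈ s := hs hxs hys (by norm_num) (by norm_num) (by norm_num)
  have hgm : g m = (2 : ℝ)⁻¹ • g x + (2 : ℝ)⁻¹ • g y := by simp only [m, map_add, map_smul]
  have hE_lt : E (g m) < (2 : ℝ)⁻¹ * E (g x) + (2 : ℝ)⁻¹ * E (g y) := by
    rw [hgm]
    exact hE.2 (hgst hxs) (hgst hys) hne (by norm_num) (by norm_num) (by norm_num)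
  have hψ_le : ψ m ≤ (2 : ℝ)⁻¹ * ψ x + (2 : ℝ)⁻¹ * ψ y :=
    hψ.2 hxs hys (by norm_num) (by norm_num) (by norm_num)
  have hxm := isMinOn_iff.1 hx m hm
  have hxy := isMinOn_iff.1 hx y hys
  have hyx := isMinOn_iff.1 hy x hxs
  linarith

end

/-- two minimizers of a strictly convex data term plus convex
regularizer share the same measurements; if the regularizer is strictly convex
the minimizer is unique. -/
theorem stmt_12 {X : Type*} [NormedAddCommGroup X] [NormedSpace ℝ X] {M : ℕ}
    (C : Set X) (hC : Convex ℝ C)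
    (E : (Fin M → ℝ) → ℝ) (hE : StrictConvexOn ℝ Set.univ E)
    (ν : X →ₗ[ℝ] (Fin M → ℝ)) (R : X → ℝ) (hR : ConvexOn ℝ Set.univ R)
    (f₁ f₂ : X) (hf₁ : f₁ ∈ C) (hf₂ : f₂ ∈ C)
    (hmin₁ : ∀ f ∈ C, E (ν f₁) + R f₁ ≤ E (ν f) + R f)
    (hmin₂ : ∀ f ∈ C, E (ν f₂) + R f₂ ≤ E (ν f) + R f) :
    ν f₁ = ν f₂ ∧ (StrictConvexOn ℝ Set.univ R → f₁ = f₂) := by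
  have hx : IsMinOn (fun f ↦ E (ν f) + R f) C f₁ := isMinOn_iff.2 hmin₁
  have hy : IsMinOn (fun f ↦ E (ν f) + R f) C f₂ := isMinOn_iff.2 hmin₂
  refine ⟨hE.map_eq_of_isMinOn_comp_add ν (Set.mapsTo_univ _ _) hC
    (hR.subset (Set.subset_univ C) hC) hx hy hf₁ hf₂, fun hRs ↦ ?_⟩
  have hobj : StrictConvexOn ℝ C (fun f ↦ E (ν f) + R f) :=
    ((hE.convexOn.comp_linearMap ν).subset (Set.subset_univ C) hC).add_strictConvexOn
      (hRs.subset (Set.subset_univ C) hC)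
  exact hobj.eq_of_isMinOn hx hy hf₁ hf₂
end

section
/- Let H₁, …, H_N be reproducing-kernel Hilbert spaces of functions on ℝ^d with kernels r₁, …, r_N, and let λ₁, …, λ_N > 0. Then for data points (x_m, y_m) ∈ ℝ^d × ℝ, m = 1,…,M, any minimizer (f₁,…,f_N) ∈ H₁ × ⋯ × H_N of Σₘ (y_m − Σₙ fₙ(x_m))² + Σₙ λₙ ‖fₙ‖²_{Hₙ} satisfies fₙ ∈ span{rₙ(·, x_m) : m = 1,…,M} for each n; consequently the total solution f = Σₙ fₙ has the form f(x) = Σₘ aₘ r(x, x_m) with the multi-kernel r(x,y) = Σₙ (1/λₙ) rₙ(x,y) and a common coefficient vector a ∈ ℝ^M. -/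
/-!
With all components but the `n`-th frozen, `fₙ` minimizes a single-kernel ridge regression whose
targets are the residuals of the other components. Along `fₙ + t v` that objective is a quadratic
in `t` that is minimal at `t = 0`, so its linear coefficient vanishes:
`λₙ ⟪fₙ, v⟫ = ∑ₘ eₘ v(xₘ) = ⟪∑ₘ eₘ rₙ(·, xₘ), v⟫`, where `eₘ = yₘ - f(xₘ)` is the residual of the
full fit. Hence `λₙ fₙ = ∑ₘ eₘ rₙ(·, xₘ)` with the same `e` for every `n`, and summing over `n`
gives the multi-kernel expansion with `a = e`.
-/

open Finset
open scoped RealInnerProductSpace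

theorem eq_zero_of_forall_mul_add_sq_mul_nonneg {b c : ℝ}
    (h : ∀ t : ℝ, 0 ≤ t * b + t ^ 2 * c) : b = 0 := by
  have hdiscrim : discrim c b 0 ≤ 0 :=
    discrim_le_zero fun t => by linarith [h t, show t ^ 2 = t * t from sq t]
  rw [discrim, mul_zero, sub_zero] at hdiscrim
  exact pow_eq_zero_iff two_ne_zero |>.mp (le_antisymm hdiscrim (sq_nonneg b))

theorem Finset.sum_apply_update {ι β : Type*} [Fintype ι] [DecidableEq ι] [AddCommMonoid β]
    {E : ι → Type*} (φ : ∀ i, E i → β) (f : ∀ i, E i) (i : ι) (x : E i) :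
    ∑ j, φ j (Function.update f i x j) = φ i x + ∑ j ∈ univ.erase i, φ j (f j) := by
  rw [← add_sum_erase _ _ (mem_univ i), Function.update_self]
  congr 1
  exact sum_congr rfl fun j hj => by rw [Function.update_of_ne (ne_of_mem_erase hj)]

section RegularizedLeastSquares

variable {ι H : Type*} [Fintype ι] [NormedAddCommGroup H] [InnerProductSpace ℝ H]

noncomputable def regularizedLeastSquares (k : ι → H) (z : ι → ℝ) (lam : ℝ) (h : H) : ℝ :=
  ∑ m, (z m - ⟪k m, h⟫) ^ 2 + lam * ‖h‖ ^ 2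

theorem regularizedLeastSquares_add_smul (k : ι → H) (z : ι → ℝ) (lam : ℝ) (h v : H) (t : ℝ) :
    regularizedLeastSquares k z lam (h + t • v) =
      regularizedLeastSquares k z lam h
        + t * (2 * (lam * ⟪h, v⟫ - ∑ m, (z m - ⟪k m, h⟫) * ⟪k m, v⟫))
        + t ^ 2 * (∑ m, ⟪k m, v⟫ ^ 2 + lam * ‖v‖ ^ 2) := by
  have hfit : ∑ m, (z m - ⟪k m, h + t • v⟫) ^ 2 = ∑ m, (z m - ⟪k m, h⟫) ^ 2
      - t * (2 * ∑ m, (z m - ⟪k m, h⟫) * ⟪k m, v⟫) + t ^ 2 * ∑ m, ⟪k m, v⟫ ^ 2 := by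
    simp only [mul_sum, ← sum_sub_distrib, ← sum_add_distrib]
    exact sum_congr rfl fun m _ => by rw [inner_add_right, real_inner_smul_right]; ring
  rw [regularizedLeastSquares, regularizedLeastSquares, hfit, norm_add_sq_real,
    real_inner_smul_right, norm_smul, Real.norm_eq_abs, mul_pow, sq_abs]
  ring

theorem smul_eq_sum_residual_smul_of_forall_le {k : ι → H} {z : ι → ℝ} {lam : ℝ} {h₀ : H}
    (hmin : ∀ h, regularizedLeastSquares k z lam h₀ ≤ regularizedLeastSquares k z lam h) :
    lam • h₀ = ∑ m, (z m - ⟪k m, h₀⟫) • k m := by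
  refine ext_inner_right ℝ fun v => ?_
  have hstationary : 2 * (lam * ⟪h₀, v⟫ - ∑ m, (z m - ⟪k m, h₀⟫) * ⟪k m, v⟫) = 0 :=
    eq_zero_of_forall_mul_add_sq_mul_nonneg (c := ∑ m, ⟪k m, v⟫ ^ 2 + lam * ‖v‖ ^ 2) fun t => by
      have := hmin (h₀ + t • v)
      rw [regularizedLeastSquares_add_smul] at this
      linarith
  simp only [real_inner_smul_left, sum_inner]
  linarith

end RegularizedLeastSquares

section MultiKernel

variable {X κ ι : Type*} [Fintype κ] [DecidableEq κ] [Fintype ι] {H : κ → Type*}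
  [∀ n, NormedAddCommGroup (H n)] [∀ n, InnerProductSpace ℝ (H n)]
  {ev : ∀ n, H n →ₗ[ℝ] (X → ℝ)} {r : ∀ n, X → H n}

theorem multiKernelObjective_update (hrepro : ∀ n x (g : H n), ⟪r n x, g⟫ = ev n g x)
    (xs : ι → X) (y : ι → ℝ) (lam : κ → ℝ) (f : ∀ n, H n) (n : κ) (h : H n) :
    (∑ m, (y m - ∑ n', ev n' (Function.update f n h n') (xs m)) ^ 2)
        + ∑ n', lam n' * ‖Function.update f n h n'‖ ^ 2 =
      regularizedLeastSquares (fun m => r n (xs m))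
          (fun m => y m - ∑ n' ∈ univ.erase n, ev n' (f n') (xs m)) (lam n) h
        + ∑ n' ∈ univ.erase n, lam n' * ‖f n'‖ ^ 2 := by
  have hfit : ∀ m, ∑ n', ev n' (Function.update f n h n') (xs m) =
      ev n h (xs m) + ∑ n' ∈ univ.erase n, ev n' (f n') (xs m) :=
    fun m => sum_apply_update (fun n' g => ev n' g (xs m)) f n h
  simp only [hfit, sum_apply_update (fun n' g => lam n' * ‖g‖ ^ 2), regularizedLeastSquares, hrepro,
    sub_add_eq_sub_sub_swap]
  ring

theorem smul_eq_sum_residual_smul_of_isMultiKernelMinimizer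
    (hrepro : ∀ n x (g : H n), ⟪r n x, g⟫ = ev n g x)
    (xs : ι → X) (y : ι → ℝ) (lam : κ → ℝ) (f : ∀ n, H n)
    (hmin : ∀ g : ∀ n, H n,
      (∑ m, (y m - ∑ n, ev n (f n) (xs m)) ^ 2) + ∑ n, lam n * ‖f n‖ ^ 2 ≤
      (∑ m, (y m - ∑ n, ev n (g n) (xs m)) ^ 2) + ∑ n, lam n * ‖g n‖ ^ 2) (n : κ) :
    lam n • f n = ∑ m, (y m - ∑ n', ev n' (f n') (xs m)) • r n (xs m) := by
  have hcomponent := smul_eq_sum_residual_smul_of_forall_le (h₀ := f n) fun h => by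
    have hle := hmin (Function.update f n h)
    have hself := multiKernelObjective_update hrepro xs y lam f n (f n)
    rw [Function.update_eq_self] at hself
    rw [hself, multiKernelObjective_update hrepro] at hle
    linarith
  rw [hcomponent]
  refine sum_congr rfl fun m _ => ?_
  rw [hrepro, ← add_sum_erase _ _ (mem_univ n), sub_add_eq_sub_sub_swap]

end MultiKernel

theorem stmt_19_general {d N M : ℕ} (H : Fin N → Type*)
    [∀ n, NormedAddCommGroup (H n)] [∀ n, InnerProductSpace ℝ (H n)]
    (ι : ∀ n, H n →ₗ[ℝ] ((Fin d → ℝ) → ℝ))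
    (r : ∀ n, (Fin d → ℝ) → H n)
    (hrepro : ∀ n (x : Fin d → ℝ) (g : H n), (inner ℝ (r n x) g : ℝ) = ι n g x)
    (xs : Fin M → (Fin d → ℝ)) (y : Fin M → ℝ)
    (lam : Fin N → ℝ) (hlam : ∀ n, 0 < lam n)
    (f : ∀ n, H n)
    (hmin : ∀ g : ∀ n, H n,
      (∑ m, (y m - ∑ n, ι n (f n) (xs m)) ^ 2) + ∑ n, lam n * ‖f n‖ ^ 2 ≤
      (∑ m, (y m - ∑ n, ι n (g n) (xs m)) ^ 2) + ∑ n, lam n * ‖g n‖ ^ 2) :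
    (∀ n, f n ∈ Submodule.span ℝ (Set.range (fun m : Fin M => r n (xs m)))) ∧
    ∃ a : Fin M → ℝ, ∀ x : Fin d → ℝ,
      (∑ n, ι n (f n) x) = ∑ m, a m * ∑ n, (lam n)⁻¹ * ι n (r n (xs m)) x := by
  set a : Fin M → ℝ := fun m => y m - ∑ n, ι n (f n) (xs m)
  have hf : ∀ n, f n = (lam n)⁻¹ • ∑ m, a m • r n (xs m) := fun n => by
    rw [← smul_eq_sum_residual_smul_of_isMultiKernelMinimizer hrepro xs y lam f hmin n,
      inv_smul_smul₀ (hlam n).ne']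
  refine ⟨fun n => ?_, a, fun x => ?_⟩
  · rw [hf n]
    exact Submodule.smul_mem _ _ (Submodule.sum_smul_mem _ _ fun m _ => Submodule.subset_span ⟨m, rfl⟩)
  · simp only [hf, map_smul, map_sum, Finset.sum_apply, Pi.smul_apply, smul_eq_mul, mul_sum]
    rw [sum_comm]
    exact sum_congr rfl fun m _ => sum_congr rfl fun n _ => by ring

/-- multi-kernel representer theorem: each component of a
minimizer of the multicomponent RKHS problem lies in the span of the kernel
sections at the data points, and the total solution is a linear combination of
the weighted multi-kernel sections with a common coefficient vector. -/
theorem stmt_19 {d N M : ℕ} (H : Fin N → Type*)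
    [∀ n, NormedAddCommGroup (H n)] [∀ n, InnerProductSpace ℝ (H n)]
    [∀ n, CompleteSpace (H n)]
    (ι : ∀ n, H n →ₗ[ℝ] ((Fin d → ℝ) → ℝ))
    (r : ∀ n, (Fin d → ℝ) → H n)
    (hrepro : ∀ n (x : Fin d → ℝ) (g : H n), (inner ℝ (r n x) g : ℝ) = ι n g x)
    (xs : Fin M → (Fin d → ℝ)) (y : Fin M → ℝ)
    (lam : Fin N → ℝ) (hlam : ∀ n, 0 < lam n)
    (f : ∀ n, H n)
    (hmin : ∀ g : ∀ n, H n,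
      (∑ m, (y m - ∑ n, ι n (f n) (xs m)) ^ 2) + ∑ n, lam n * ‖f n‖ ^ 2 ≤
      (∑ m, (y m - ∑ n, ι n (g n) (xs m)) ^ 2) + ∑ n, lam n * ‖g n‖ ^ 2) :
    (∀ n, f n ∈ Submodule.span ℝ (Set.range (fun m : Fin M => r n (xs m)))) ∧
    ∃ a : Fin M → ℝ, ∀ x : Fin d → ℝ,
      (∑ n, ι n (f n) x) = ∑ m, a m * ∑ n, (lam n)⁻¹ * ι n (r n (xs m)) x :=
  stmt_19_general H ι r hrepro xs y lam hlam f hmin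
end
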